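/- The canonical inclusion of the n-th symmetric power (SPⁿ(X), d_n) into the multiset space (ℕ[X], d_{ℕ[X]}) is an isometric embedding; in particular X ↪ ℕ[X], x ↦ [x], is an isometric embedding. -/

import Mathlib

/-!
When `card s = card t`, a matching of `s` padded by `k` copies of `e` with `t` padded by `j`
copies of `e` forces `k = j`, and the padding can be stripped one copy of `e` at a time without
increasing the cost: a pair `(e, e)` is simply dropped, and otherwise two pairs `(e, b)` and
`(a, e)` are merged into `(a, b)`, which is no more expensive by the triangle inequality. Hence padding
never helps, so `d_{ℕ[X]} = d_n` on `SPⁿ(X)`; for singletons the only matching is `x ↦ y`.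
-/

open Multiset Metric

variable {X : Type*}

/-- Matching cost between two multisets of equal cardinality: infimum over all
orderings of the summed distances. -/
noncomputable def matchCost [MetricSpace X] (s t : Multiset X) : ℝ :=
  sInf { c : ℝ | ∃ (l₁ l₂ : List X),
    (↑l₁ : Multiset X) = s ∧ (↑l₂ : Multiset X) = t ∧
    c = (List.zipWith dist l₁ l₂).sum }

/-- Matching distance on finite multisets of a pointed metric space `(X, e)`:
pad both sides with copies of the basepoint and take the infimum over all matchings. -/
noncomputable def dN [MetricSpace X] (e : X) (s t : Multiset X) : ℝ :=
  sInf { c : ℝ | ∃ (l₁ l₂ : List X) (k j : ℕ),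
    l₁.length = l₂.length ∧
    (↑l₁ : Multiset X) = s + Multiset.replicate k e ∧
    (↑l₂ : Multiset X) = t + Multiset.replicate j e ∧
    c = (List.zipWith dist l₁ l₂).sum }


def couplings {α : Type*} (s t : Multiset α) : Set (Multiset (α × α)) :=
  {P | P.map Prod.fst = s ∧ P.map Prod.snd = t}

lemma coe_zip_mem_couplings {α : Type*} {l₁ l₂ : List α} (h : l₁.length = l₂.length) :
    (l₁.zip l₂ : Multiset (α × α)) ∈ couplings (l₁ : Multiset α) l₂ :=
  ⟨congrArg _ (List.map_fst_zip h.le), congrArg _ (List.map_snd_zip h.ge)⟩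

lemma exists_mem_of_mem_map_fst {α : Type*} {P : Multiset (α × α)} {a : α}
    (h : a ∈ P.map Prod.fst) : ∃ b, (a, b) ∈ P := by
  simpa using h

lemma exists_mem_of_mem_map_snd {α : Type*} {P : Multiset (α × α)} {b : α}
    (h : b ∈ P.map Prod.snd) : ∃ a, (a, b) ∈ P := by
  simpa using h

section

variable [MetricSpace X]

noncomputable def pairCost (P : Multiset (X × X)) : ℝ :=
  (P.map fun q => dist q.1 q.2).sum

lemma pairCost_nonneg (P : Multiset (X × X)) : 0 ≤ pairCost P :=
  Multiset.sum_nonneg fun _ hc => by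
    obtain ⟨q, -, rfl⟩ := Multiset.mem_map.mp hc
    exact dist_nonneg

lemma pairCost_cons (q : X × X) (P : Multiset (X × X)) :
    pairCost (q ::ₘ P) = dist q.1 q.2 + pairCost P := by
  simp [pairCost]

lemma pairCost_coe_zip (l₁ l₂ : List X) :
    pairCost (l₁.zip l₂ : Multiset (X × X)) = (List.zipWith dist l₁ l₂).sum := by
  simp only [pairCost, Multiset.map_coe, Multiset.sum_coe, List.map_zip_eq_zipWith]
  rfl

lemma exists_coupling_le_of_mem_couplings_cons {e : X} {s t : Multiset X} {P : Multiset (X × X)}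
    (hP : P ∈ couplings (e ::ₘ s) (e ::ₘ t)) :
    ∃ Q ∈ couplings s t, pairCost Q ≤ pairCost P := by
  classical
  obtain ⟨hfst, hsnd⟩ := hP
  by_cases hee : (e, e) ∈ P
  · obtain ⟨R, rfl⟩ := Multiset.exists_cons_of_mem hee
    simp only [Multiset.map_cons, Multiset.cons_inj_right] at hfst hsnd
    exact ⟨R, ⟨hfst, hsnd⟩, by simp [pairCost_cons]⟩
  obtain ⟨b, heb⟩ := exists_mem_of_mem_map_fst (hfst ▸ Multiset.mem_cons_self e s)
  obtain ⟨a, hae⟩ := exists_mem_of_mem_map_snd (hsnd ▸ Multiset.mem_cons_self e t)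
  have hne : (a, e) ≠ (e, b) := by
    rintro ⟨rfl, rfl⟩
    exact hee hae
  obtain ⟨R, hR⟩ := Multiset.exists_cons_of_mem ((Multiset.mem_erase_of_ne hne).mpr hae)
  obtain rfl : P = (e, b) ::ₘ (a, e) ::ₘ R := by rw [← hR, Multiset.cons_erase heb]
  refine ⟨(a, b) ::ₘ R, ⟨?_, ?_⟩, ?_⟩
  · simpa using hfst
  · simpa [Multiset.cons_swap b e] using hsnd
  · simp only [pairCost_cons]
    linarith [dist_triangle a e b]

lemma exists_coupling_le_of_mem_couplings_add_replicate {e : X} {s t : Multiset X} (k : ℕ)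
    {P : Multiset (X × X)}
    (hP : P ∈ couplings (s + Multiset.replicate k e) (t + Multiset.replicate k e)) :
    ∃ Q ∈ couplings s t, pairCost Q ≤ pairCost P := by
  induction k generalizing P with
  | zero => exact ⟨P, by simpa using hP, le_rfl⟩
  | succ k ih =>
    simp only [Multiset.replicate_succ, Multiset.add_cons] at hP
    obtain ⟨Q, hQ, hQP⟩ := exists_coupling_le_of_mem_couplings_cons hP
    obtain ⟨Q', hQ', hQ'Q⟩ := ih hQ
    exact ⟨Q', hQ', hQ'Q.trans hQP⟩

lemma zipWith_dist_sum_nonneg (l₁ l₂ : List X) : 0 ≤ (List.zipWith dist l₁ l₂).sum := by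
  rw [← pairCost_coe_zip]
  exact pairCost_nonneg _

lemma matchCost_le_pairCost {s t : Multiset X} {Q : Multiset (X × X)} (hQ : Q ∈ couplings s t) :
    matchCost s t ≤ pairCost Q := by
  refine csInf_le ⟨0, ?_⟩ ⟨Q.toList.map Prod.fst, Q.toList.map Prod.snd, ?_, ?_, ?_⟩
  · rintro _ ⟨l₁, l₂, -, -, rfl⟩
    exact zipWith_dist_sum_nonneg l₁ l₂
  · rw [← Multiset.map_coe, Q.coe_toList, hQ.1]
  · rw [← Multiset.map_coe, Q.coe_toList, hQ.2]
  · rw [List.zipWith_map, List.zipWith_self, ← Q.coe_toList]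
    simp [pairCost]

lemma dN_le_matchCost (e : X) {s t : Multiset X} (h : Multiset.card s = Multiset.card t) :
    dN e s t ≤ matchCost s t := by
  refine csInf_le_csInf ⟨0, ?_⟩ ⟨_, s.toList, t.toList, s.coe_toList, t.coe_toList, rfl⟩ ?_
  · rintro _ ⟨l₁, l₂, -, -, -, -, -, rfl⟩
    exact zipWith_dist_sum_nonneg l₁ l₂
  · rintro _ ⟨l₁, l₂, rfl, rfl, rfl⟩
    exact ⟨l₁, l₂, 0, 0, by simpa using h, by simp, by simp, rfl⟩

lemma matchCost_le_dN (e : X) {s t : Multiset X} (h : Multiset.card s = Multiset.card t) :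
    matchCost s t ≤ dN e s t := by
  refine le_csInf ⟨_, s.toList, t.toList, 0, 0, by simpa using h, by simp, by simp, rfl⟩ ?_
  rintro _ ⟨l₁, l₂, k, j, hlen, h₁, h₂, rfl⟩
  obtain rfl : k = j := by
    have hk := congrArg Multiset.card h₁
    have hj := congrArg Multiset.card h₂
    simp only [Multiset.coe_card, Multiset.card_add, Multiset.card_replicate] at hk hj
    omega
  have hP := coe_zip_mem_couplings hlen
  rw [h₁, h₂] at hP
  obtain ⟨Q, hQ, hQP⟩ := exists_coupling_le_of_mem_couplings_add_replicate k hP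
  rw [← pairCost_coe_zip]
  exact (matchCost_le_pairCost hQ).trans hQP

lemma dN_eq_matchCost (e : X) {s t : Multiset X} (h : Multiset.card s = Multiset.card t) :
    dN e s t = matchCost s t :=
  (dN_le_matchCost e h).antisymm (matchCost_le_dN e h)

lemma matchCost_singleton (x y : X) : matchCost {x} {y} = dist x y := by
  apply le_antisymm
  · calc matchCost {x} {y} ≤ pairCost {(x, y)} := matchCost_le_pairCost (by simp [couplings])
      _ = dist x y := by simp [pairCost]
  · refine le_csInf ⟨_, [x], [y], rfl, rfl, rfl⟩ ?_
    rintro _ ⟨l₁, l₂, h₁, h₂, rfl⟩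
    rw [Multiset.coe_eq_singleton] at h₁ h₂
    simp [h₁, h₂]

end

/-- The canonical inclusion `(SPⁿ(X), d_n) ↪ (ℕ[X], d_{ℕ[X]})` is an isometric
embedding: on multisets of a common cardinality `n`, the matching distance `d_{ℕ[X]}`
equals `d_n`.  In particular `X ↪ ℕ[X]`, `x ↦ [x]`, is an isometric embedding. -/
theorem SPn_isometric_in_NX [MetricSpace X] (e : X) (n : ℕ) :
    (∀ s t : Multiset X, Multiset.card s = n → Multiset.card t = n →
      dN e s t = matchCost s t) ∧
    (∀ x y : X, dN e {x} {y} = dist x y) :=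
  ⟨fun _ _ hs ht => dN_eq_matchCost e (hs.trans ht.symm), fun x y => by
    rw [dN_eq_matchCost e (by simp), matchCost_singleton]⟩
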